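/- Let (R, m) be a Cohen-Macaulay local ring of dimension one and I a regular ideal of R. Let b ∈ I be a non-zerodivisor of R, and suppose a ∈ R is such that the principal ideal (a) is a reduction of the ideal b(R:I) of R. Then J := (a/b)I (an ideal of R, since a/b ∈ R:I) is a partial trace ideal of I. -/

import Mathlib

/-!
A map `f : I → R` is multiplication by `c/b` with `c = f b ∈ b(R:I)`, so its image is the colon
ideal `(cI : b)`. For regular `c` the exact sequences `0 → R/(cI : b) → R/cI → R/bR → 0` and
`0 → R/I → R/cI → R/cR → 0` give `ℓ(R/Im f) + ℓ(R/bR) = ℓ(R/I) + ℓ(R/cR)`, and `ℓ(R/bR)` is finite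
in dimension one. Since `(a)` is a reduction of `b(R:I)`, `a^m` divides `c^(n+m)` for every `m`,
so `ℓ(R/aR) ≤ ℓ(R/cR)`: the map `a/b` minimizes `ℓ(R/Im f)`. When `c` is a zero-divisor `R/Im f`
has infinite length, since a finite-length `R/cR` is killed by a power of the maximal ideal,
which contains a non-zerodivisor.
-/

/-- The length of an `R`-module `M`: the supremum of lengths of strictly
increasing chains of submodules of `M`, valued in `ℕ∞`. -/
noncomputable def modLength (R M : Type*) [CommRing R] [AddCommGroup M] [Module R M] : ℕ∞ :=
  ⨆ s : RelSeries {p : Submodule R M × Submodule R M | p.1 < p.2}, (s.length : ℕ∞)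

/-- `h(M) = inf { ℓ_R(R/Im f) : f ∈ Hom_R(M,R) }`. -/
noncomputable def hInv (R M : Type*) [CommRing R] [AddCommGroup M] [Module R M] : ℕ∞ :=
  ⨅ f : M →ₗ[R] R, modLength R (R ⧸ LinearMap.range f)

open Pointwise Ring

section Colon

variable {R : Type*} [CommRing R]

theorem modLength_eq_length (M : Type*) [AddCommGroup M] [Module R M] :
    modLength R M = Module.length R M := by
  rw [Module.length_eq_height]
  refine le_antisymm (iSup_le fun p => Order.length_le_height le_top) (Order.height_le ?_)
  exact fun p _ => le_iSup (fun s : LTSeries (Submodule R M) => (s.length : ℕ∞)) p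

theorem length_quotient_le_of_le {A B : Ideal R} (h : A ≤ B) :
    Module.length R (R ⧸ B) ≤ Module.length R (R ⧸ A) :=
  Module.length_le_of_surjective (Submodule.factor h) (Submodule.factor_surjective h)

theorem length_quotient_smul {x : R} (hx : x ∈ nonZeroDivisors R) (C : Ideal R) :
    Module.length R (R ⧸ x • C) = Module.length R (R ⧸ C) + ord R x :=
  Module.length_eq_add_of_exact _ _ (C.mulQuot_injective hx) C.quotOfMul_surjective
    C.exact_mulQuot_quotOfMul

theorem mem_colon_smul_iff {I : Ideal R} {a b x : R} :
    x ∈ (a • I).colon {b} ↔ ∃ y ∈ I, b * x = a * y := by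
  rw [Submodule.mem_colon_singleton, Submodule.mem_smul_pointwise_iff_exists]
  simp only [smul_eq_mul, mul_comm x b, eq_comm]

theorem smul_colon_singleton_eq {A : Ideal R} {x : R} (h : A ≤ Ideal.span {x}) :
    x • A.colon {x} = A := by
  ext y
  simp only [Submodule.mem_smul_pointwise_iff_exists, Submodule.mem_colon_singleton, smul_eq_mul]
  constructor
  · rintro ⟨z, hz, rfl⟩
    rwa [mul_comm]
  · intro hy
    obtain ⟨z, rfl⟩ := Ideal.mem_span_singleton'.1 (h hy)
    exact ⟨z, hy, mul_comm x z⟩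

theorem length_quotient_colon_add_ord {A : Ideal R} {x : R} (hx : x ∈ nonZeroDivisors R)
    (h : A ≤ Ideal.span {x}) :
    Module.length R (R ⧸ A.colon {x}) + ord R x = Module.length R (R ⧸ A) := by
  conv_rhs => rw [← smul_colon_singleton_eq h]
  exact (length_quotient_smul hx _).symm

end Colon

section IdealHom

variable {R : Type*} [CommRing R] {I : Ideal R} {b c : R}

theorem smul_le_span_singleton (c : R) (I : Ideal R) : c • I ≤ Ideal.span {c} := by
  rintro _ ⟨y, -, rfl⟩
  exact Ideal.mem_span_singleton.2 ⟨y, rfl⟩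

theorem mul_apply_eq_apply_mul (f : I →ₗ[R] R) (hbI : b ∈ I) (y : I) :
    b * f y = f ⟨b, hbI⟩ * y := by
  rw [← smul_eq_mul, ← map_smul, mul_comm, ← smul_eq_mul, ← map_smul]
  congr 1
  ext
  exact mul_comm _ _

theorem smul_le_span_singleton_of_mul_apply {f : I →ₗ[R] R} (hf : ∀ y : I, b * f y = c * y) :
    c • I ≤ Ideal.span {b} := by
  rintro _ ⟨y, hy, rfl⟩
  exact Ideal.mem_span_singleton'.2 ⟨f ⟨y, hy⟩, (mul_comm _ _).trans (hf ⟨y, hy⟩)⟩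

theorem range_eq_colon_of_mul_apply (hb : b ∈ nonZeroDivisors R) {f : I →ₗ[R] R}
    (hf : ∀ y : I, b * f y = c * y) : LinearMap.range f = (c • I).colon {b} := by
  ext x
  rw [mem_colon_smul_iff]
  constructor
  · rintro ⟨y, rfl⟩
    exact ⟨y, y.2, hf y⟩
  · rintro ⟨y, hy, hxy⟩
    exact ⟨⟨y, hy⟩, (mul_cancel_left_mem_nonZeroDivisors hb).1 ((hf _).trans hxy.symm)⟩

theorem exists_mul_apply_eq (hb : b ∈ nonZeroDivisors R) (hc : c • I ≤ Ideal.span {b}) :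
    ∃ f : I →ₗ[R] R, ∀ y : I, b * f y = c * y := by
  let e := LinearEquiv.ofInjective (LinearMap.mul R R b)
    fun _ _ h => (mul_cancel_left_mem_nonZeroDivisors hb).1 h
  have hmem (y : I) :
      (LinearMap.mul R R c ∘ₗ I.subtype) y ∈ LinearMap.range (LinearMap.mul R R b) := by
    obtain ⟨r, hr⟩ := Ideal.mem_span_singleton'.1 (hc ⟨y, y.2, rfl⟩)
    exact ⟨r, (mul_comm _ _).trans hr⟩
  refine ⟨e.symm ∘ₗ (LinearMap.mul R R c ∘ₗ I.subtype).codRestrict _ hmem, fun y => ?_⟩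
  exact congrArg Subtype.val (e.apply_symm_apply _)

theorem exists_algebraMap_eq_mul_iff_smul_le_span_singleton {L : Type*} [CommRing L]
    [Algebra R L] [IsFractionRing R L] (hb : b ∈ nonZeroDivisors R) (x : R) :
    (∃ α : L, (∀ y ∈ I, ∃ r : R, algebraMap R L r = α * algebraMap R L y) ∧
      algebraMap R L x = algebraMap R L b * α) ↔ x • I ≤ Ideal.span {b} := by
  constructor
  · rintro ⟨α, hα, hx⟩ z hz
    obtain ⟨y, hy, rfl⟩ := (Submodule.mem_smul_pointwise_iff_exists _ _ _).1 hz
    obtain ⟨r, hr⟩ := hα y hy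
    refine Ideal.mem_span_singleton'.2 ⟨r, IsFractionRing.injective R L ?_⟩
    rw [smul_eq_mul, map_mul, map_mul, hr, hx]
    ring
  · intro h
    refine ⟨IsLocalization.mk' L x ⟨b, hb⟩, fun y hy => ?_,
      (IsLocalization.mk'_spec' L x (⟨b, hb⟩ : nonZeroDivisors R)).symm⟩
    obtain ⟨r, hr⟩ := Ideal.mem_span_singleton'.1 (h (Submodule.smul_mem_pointwise_smul y x I hy))
    refine ⟨r, ?_⟩
    rw [mul_comm, IsLocalization.mul_mk'_eq_mk'_of_mul, mul_comm, ← smul_eq_mul, ← hr]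
    exact (IsLocalization.mk'_mul_cancel_right r (⟨b, hb⟩ : nonZeroDivisors R)).symm

end IdealHom

theorem ENat.le_of_forall_nsmul_le_add_nsmul {x y : ℕ∞} {n : ℕ}
    (h : ∀ m : ℕ, m • x ≤ (n + m) • y) : x ≤ y := by
  induction y using ENat.recTopCoe with
  | top => exact le_top
  | coe k =>
    induction x using ENat.recTopCoe with
    | top =>
      have h1 := h 1
      simp only [nsmul_eq_mul] at h1
      exact absurd h1 (by norm_cast)
    | coe j =>
      have hm := h (n * k + 1)
      simp only [nsmul_eq_mul] at hm
      norm_cast at hm ⊢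
      by_contra! hkj
      nlinarith [Nat.mul_le_mul_left (n * k + 1) hkj]

section Reduction

variable {R : Type*} [CommRing R] {K : Ideal R} {a : R} {n : ℕ}

theorem pow_dvd_pow_add_of_reduction (hred : K ^ (n + 1) = Ideal.span {a} * K ^ n) {c : R}
    (hc : c ∈ K) (m : ℕ) : a ^ m ∣ c ^ (n + m) := by
  have hpow : K ^ (n + m) = Ideal.span {a} ^ m * K ^ n := by
    induction m with
    | zero => simp
    | succ m ih =>
      calc K ^ (n + (m + 1)) = K ^ (n + m) * K := by rw [← add_assoc, pow_succ]
        _ = Ideal.span {a} ^ m * K ^ (n + 1) := by rw [ih, mul_assoc, ← pow_succ]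
        _ = Ideal.span {a} ^ (m + 1) * K ^ n := by rw [hred, ← mul_assoc, ← pow_succ]
  have hmem : c ^ (n + m) ∈ Ideal.span {a} ^ m * K ^ n := hpow ▸ Ideal.pow_mem_pow hc _
  rw [← Ideal.mem_span_singleton, ← Ideal.span_singleton_pow]
  exact Ideal.mul_le_left hmem

theorem mem_nonZeroDivisors_of_reduction (hred : K ^ (n + 1) = Ideal.span {a} * K ^ n) {b : R}
    (hbK : b ∈ K) (hb : b ∈ nonZeroDivisors R) : a ∈ nonZeroDivisors R := by
  obtain ⟨t, ht⟩ := pow_one a ▸ pow_dvd_pow_add_of_reduction hred hbK 1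
  exact (mul_mem_nonZeroDivisors.1 (ht ▸ pow_mem hb _)).1

theorem ord_le_ord_of_reduction (hred : K ^ (n + 1) = Ideal.span {a} * K ^ n)
    (ha : a ∈ nonZeroDivisors R) {c : R} (hcK : c ∈ K) (hc : c ∈ nonZeroDivisors R) :
    ord R a ≤ ord R c := by
  refine ENat.le_of_forall_nsmul_le_add_nsmul (n := n) fun m => ?_
  rw [← ord_pow ha, ← ord_pow hc]
  exact ord_le_ord_of_dvd (pow_dvd_pow_add_of_reduction hred hcK m)

end Reduction

section LocalRing

variable {R : Type*} [CommRing R] [IsLocalRing R]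

theorem mem_nonZeroDivisors_of_ord_ne_top
    (hdepth : ∃ x ∈ IsLocalRing.maximalIdeal R, x ∈ nonZeroDivisors R) {c : R}
    (hc : ord R c ≠ ⊤) : c ∈ nonZeroDivisors R := by
  obtain ⟨x, hxm, hx⟩ := hdepth
  have hfin : IsFiniteLength R (R ⧸ Ideal.span {c}) := Module.length_ne_top_iff.1 hc
  have : IsArtinianRing (R ⧸ Ideal.span {c}) :=
    isArtinian_of_tower R (isFiniteLength_iff_isNoetherian_isArtinian.1 hfin).2
  obtain ⟨k, hk⟩ := IsLocalRing.exists_maximalIdeal_pow_le_of_isArtinianRing_quotient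
    (Ideal.span {c})
  obtain ⟨t, ht⟩ := Ideal.mem_span_singleton'.1 (hk (Ideal.pow_mem_pow hxm k))
  exact (mul_mem_nonZeroDivisors.1 (ht ▸ pow_mem hx k)).2

theorem length_quotient_colon_le
    (hdepth : ∃ x ∈ IsLocalRing.maximalIdeal R, x ∈ nonZeroDivisors R) {I : Ideal R} {a b c : R}
    (ha : a ∈ nonZeroDivisors R) (hb : b ∈ nonZeroDivisors R) (hb_fin : ord R b ≠ ⊤)
    (haI : a • I ≤ Ideal.span {b}) (hcI : c • I ≤ Ideal.span {b})
    (hac : c ∈ nonZeroDivisors R → ord R a ≤ ord R c) :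
    Module.length R (R ⧸ (a • I).colon {b}) ≤ Module.length R (R ⧸ (c • I).colon {b}) := by
  by_cases hfin : Module.length R (R ⧸ (c • I).colon {b}) = ⊤
  · exact hfin ▸ le_top
  have hc : c ∈ nonZeroDivisors R := by
    refine mem_nonZeroDivisors_of_ord_ne_top hdepth (ne_top_of_le_ne_top ?_
      (length_quotient_le_of_le (smul_le_span_singleton c I)))
    rw [← length_quotient_colon_add_ord hb hcI]
    exact WithTop.add_ne_top.2 ⟨hfin, hb_fin⟩
  refine (ENat.add_le_add_iff_right hb_fin).1 ?_
  calc Module.length R (R ⧸ (a • I).colon {b}) + ord R b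
      = Module.length R (R ⧸ I) + ord R a := by
        rw [length_quotient_colon_add_ord hb haI, length_quotient_smul ha]
    _ ≤ Module.length R (R ⧸ I) + ord R c := add_le_add_right (hac hc) _
    _ = Module.length R (R ⧸ (c • I).colon {b}) + ord R b := by
        rw [length_quotient_colon_add_ord hb hcI, length_quotient_smul hc]

end LocalRing

theorem stmt10_general (R : Type*) [CommRing R] [IsNoetherianRing R] [IsLocalRing R]
    (hdim : ringKrullDim R = 1)
    (hdepth : ∃ x ∈ IsLocalRing.maximalIdeal R, x ∈ nonZeroDivisors R)
    (I : Ideal R)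
    (b : R) (hbI : b ∈ I) (hb : b ∈ nonZeroDivisors R)
    (a : R)
    -- `K` is the ideal `b(R:I)` of `R`:
    (K : Ideal R)
    (hK : ∀ x : R, x ∈ K ↔ ∃ α : FractionRing R,
      (∀ y ∈ I, ∃ r : R,
        algebraMap R (FractionRing R) r = α * algebraMap R (FractionRing R) y) ∧
      algebraMap R (FractionRing R) x = algebraMap R (FractionRing R) b * α)
    -- `(a)` is a reduction of `K`:
    (haK : a ∈ K)
    (hred : ∃ n : ℕ, 0 < n ∧ K ^ (n + 1) = Ideal.span {a} * K ^ n)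
    -- `J` is the ideal `(a/b)I` of `R`:
    (J : Ideal R)
    (hJ : ∀ x : R, x ∈ J ↔ ∃ y ∈ I, b * x = a * y) :
    ∃ f : ↥I →ₗ[R] R, LinearMap.range f = J ∧ modLength R (R ⧸ J) = hInv R ↥I := by
  have : KrullDimLE 1 R := krullDimLE_iff.2 hdim.le
  obtain ⟨n, -, hred⟩ := hred
  have hK' (x : R) : x ∈ K ↔ x • I ≤ Ideal.span {b} :=
    (hK x).trans (exists_algebraMap_eq_mul_iff_smul_le_span_singleton hb x)
  have haI : a • I ≤ Ideal.span {b} := (hK' a).1 haK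
  have ha : a ∈ nonZeroDivisors R :=
    mem_nonZeroDivisors_of_reduction hred ((hK' b).2 (smul_le_span_singleton b I)) hb
  obtain ⟨f₀, hf₀⟩ := exists_mul_apply_eq hb haI
  have hJ' : J = (a • I).colon {b} := by
    ext x
    rw [hJ, mem_colon_smul_iff]
  have hrange : LinearMap.range f₀ = J := hJ' ▸ range_eq_colon_of_mul_apply hb hf₀
  refine ⟨f₀, hrange, le_antisymm (le_iInf fun f => ?_) (hrange ▸ iInf_le _ f₀)⟩
  have hf := mul_apply_eq_apply_mul f hbI
  have hcI := smul_le_span_singleton_of_mul_apply hf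
  rw [range_eq_colon_of_mul_apply hb hf, hJ', modLength_eq_length, modLength_eq_length]
  exact length_quotient_colon_le hdepth ha hb (ord_ne_top hb) haI hcI
    fun hc => ord_le_ord_of_reduction hred ha ((hK' _).2 hcI) hc

/-- Let `(R, m)` be a one-dimensional Cohen-Macaulay local ring, `I` a
regular ideal, `b ∈ I` a non-zerodivisor, and `a ∈ R` such that `(a)` is a reduction of
the ideal `K = b(R:I)` of `R`.  Then `J := (a/b)I` (the ideal of all `x ∈ R` with
`bx ∈ aI`) is a partial trace ideal of `I`:  `J = Im f` for some `f : I →ₗ R` and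
`ℓ_R(R/J) = h(I)`. -/
theorem stmt10 (R : Type*) [CommRing R] [IsNoetherianRing R] [IsLocalRing R]
    (hdim : ringKrullDim R = 1)
    (hdepth : ∃ x ∈ IsLocalRing.maximalIdeal R, x ∈ nonZeroDivisors R)
    (I : Ideal R) (hreg : ∃ x ∈ I, x ∈ nonZeroDivisors R)
    (b : R) (hbI : b ∈ I) (hb : b ∈ nonZeroDivisors R)
    (a : R)
    -- `K` is the ideal `b(R:I)` of `R`:
    (K : Ideal R)
    (hK : ∀ x : R, x ∈ K ↔ ∃ α : FractionRing R,
      (∀ y ∈ I, ∃ r : R,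
        algebraMap R (FractionRing R) r = α * algebraMap R (FractionRing R) y) ∧
      algebraMap R (FractionRing R) x = algebraMap R (FractionRing R) b * α)
    -- `(a)` is a reduction of `K`:
    (haK : a ∈ K)
    (hred : ∃ n : ℕ, 0 < n ∧ K ^ (n + 1) = Ideal.span {a} * K ^ n)
    -- `J` is the ideal `(a/b)I` of `R`:
    (J : Ideal R)
    (hJ : ∀ x : R, x ∈ J ↔ ∃ y ∈ I, b * x = a * y) :
    ∃ f : ↥I →ₗ[R] R, LinearMap.range f = J ∧ modLength R (R ⧸ J) = hInv R ↥I :=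
  stmt10_general R hdim hdepth I b hbI hb a K hK haK hred J hJ
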